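/- arXiv:0907.2831 — 2 statements merged into one kernel-verified Lean document; each statement's English description precedes it below -/
import Mathlib

section
/- Szemerédi's theorem (r_k(n) = o(n)) for a fixed k ≥ 3 is equivalent to the statement lim_{D→∞} α_{k,D} = 0, where α_{k,D} = lim_{n→∞} R_{k,D}(n)/n. -/
/-- `S` contains a `k`-term arithmetic progression with common difference `d`,
starting at some `i ≥ 1`. -/
def HasAPd (S : Finset ℕ) (k d : ℕ) : Prop :=
  ∃ i : ℕ, 1 ≤ i ∧ ∀ j < k, i + j * d ∈ S

/-- `S ⊆ {1,…,n}` and `S` contains no `k`-term AP with common difference `d`,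
`1 ≤ d ≤ D`. -/
def AvoidsAP (k D n : ℕ) (S : Finset ℕ) : Prop :=
  S ⊆ Finset.Icc 1 n ∧ ∀ d : ℕ, 1 ≤ d → d ≤ D → ¬ HasAPd S k d

/-- `R k D n` : maximum cardinality of such an `S`. -/
noncomputable def R (k D n : ℕ) : ℕ :=
  sSup {m : ℕ | ∃ S : Finset ℕ, AvoidsAP k D n S ∧ S.card = m}

/-- `S ⊆ {1,…,n}` contains no `k`-term AP with any common difference `d ≥ 1`. -/
def AvoidsAPAll (k n : ℕ) (S : Finset ℕ) : Prop :=
  S ⊆ Finset.Icc 1 n ∧ ∀ d : ℕ, 1 ≤ d → ¬ HasAPd S k d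

/-- `r k n` : maximum cardinality of a subset of `{1,…,n}` with no `k`-term AP. -/
noncomputable def rS (k n : ℕ) : ℕ :=
  sSup {m : ℕ | ∃ S : Finset ℕ, AvoidsAPAll k n S ∧ S.card = m}

/-!
A set avoiding `k`-term progressions of difference at most `D` meets every window of
`L = (k - 1) D + 1` consecutive integers in a set with no `k`-term progression at all, since a
progression inside the window has `(k - 1) d ≤ L - 1`. Cutting `{1, …, n}` into windows gives
`R_{k,D}(n) ≤ (n / L + 1) r_k(L)`, hence `α_{k,D} ≤ r_k(L) / L`, which tends to `0` with `D`
under Szemerédi's theorem. Conversely `r_k(n) ≤ R_{k,D}(n)`, so `limsup r_k(n) / n ≤ α_{k,D}`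
for every `D`.
-/

open Finset Filter Topology

lemma card_le_R {k D n : ℕ} {S : Finset ℕ} (hS : AvoidsAP k D n S) : #S ≤ R k D n := by
  refine le_csSup ⟨n, ?_⟩ ⟨S, hS, rfl⟩
  rintro _ ⟨T, hT, rfl⟩
  simpa using card_le_card hT.1

lemma card_le_rS {k n : ℕ} {S : Finset ℕ} (hS : AvoidsAPAll k n S) : #S ≤ rS k n := by
  refine le_csSup ⟨n, ?_⟩ ⟨S, hS, rfl⟩
  rintro _ ⟨T, hT, rfl⟩
  simpa using card_le_card hT.1

lemma R_le {k D n m : ℕ} (h : ∀ S, AvoidsAP k D n S → #S ≤ m) : R k D n ≤ m :=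
  csSup_le' fun _ ⟨S, hS, hm⟩ => hm ▸ h S hS

lemma rS_le_R (k D n : ℕ) : rS k n ≤ R k D n :=
  csSup_le' fun _ ⟨_, hS, hm⟩ => hm ▸ card_le_R ⟨hS.1, fun d hd _ => hS.2 d hd⟩

lemma card_inter_Ioc_le_rS {k D n : ℕ} (hk : 2 ≤ k) {S : Finset ℕ} (hS : AvoidsAP k D n S)
    (a : ℕ) : #(S ∩ Ioc a (a + ((k - 1) * D + 1))) ≤ rS k ((k - 1) * D + 1) := by
  set L := (k - 1) * D + 1
  set T := (Icc 1 L).filter (fun x => a + x ∈ S)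
  have hT : AvoidsAPAll k L T := by
    refine ⟨filter_subset _ _, fun d hd ⟨i, hi, hAP⟩ => ?_⟩
    have hlast : i + (k - 1) * d ≤ L := (mem_Icc.1 (mem_filter.1 (hAP (k - 1) (by omega))).1).2
    have hdD : d ≤ D := le_of_mul_le_mul_left (by omega : (k - 1) * d ≤ (k - 1) * D) (by omega)
    refine hS.2 d hd hdD ⟨a + i, by omega, fun j hj => ?_⟩
    simpa only [add_assoc] using (mem_filter.1 (hAP j hj)).2
  calc #(S ∩ Ioc a (a + L))
      ≤ #(T.image (a + ·)) := card_le_card fun x hx => by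
        obtain ⟨hxS, hxa, hxL⟩ := by simpa only [mem_inter, mem_Ioc] using hx
        refine mem_image.2 ⟨x - a, mem_filter.2 ⟨mem_Icc.2 ⟨by omega, by omega⟩, ?_⟩, by omega⟩
        rwa [Nat.add_sub_cancel' hxa.le]
    _ ≤ #T := card_image_le
    _ ≤ rS k L := card_le_rS hT

lemma card_le_of_card_inter_Ioc_le {S : Finset ℕ} {n L c : ℕ} (hL : 0 < L) (hS : S ⊆ Icc 1 n)
    (h : ∀ a, #(S ∩ Ioc a (a + L)) ≤ c) : #S ≤ (n / L + 1) * c := by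
  have hcover : S ⊆ (range (n / L + 1)).biUnion fun j => S ∩ Ioc (j * L) (j * L + L) := by
    intro x hx
    have hx1n := mem_Icc.1 (hS hx)
    have hdiv := Nat.div_add_mod (x - 1) L
    have hmod := Nat.mod_lt (x - 1) hL
    have hle : (x - 1) / L ≤ n / L := Nat.div_le_div_right (by omega)
    refine mem_biUnion.2 ⟨(x - 1) / L, mem_range.2 (by omega), mem_inter.2 ⟨hx, mem_Ioc.2 ?_⟩⟩
    rw [mul_comm] at hdiv
    constructor <;> omega
  calc #S ≤ ∑ j ∈ range (n / L + 1), #(S ∩ Ioc (j * L) (j * L + L)) :=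
        (card_le_card hcover).trans card_biUnion_le
    _ ≤ ∑ _j ∈ range (n / L + 1), c := sum_le_sum fun j _ => h (j * L)
    _ = (n / L + 1) * c := by rw [sum_const, card_range, smul_eq_mul]

lemma R_le_mul_rS {k : ℕ} (hk : 2 ≤ k) (D n : ℕ) :
    R k D n ≤ (n / ((k - 1) * D + 1) + 1) * rS k ((k - 1) * D + 1) :=
  R_le fun _ hS => card_le_of_card_inter_Ioc_le (Nat.succ_pos _) hS.1 (card_inter_Ioc_le_rS hk hS)

lemma R_div_le {k : ℕ} (hk : 2 ≤ k) (D n : ℕ) :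
    (R k D n : ℝ) / n ≤
      rS k ((k - 1) * D + 1) / ((k - 1) * D + 1 : ℕ) + rS k ((k - 1) * D + 1) / n := by
  have hR := R_le_mul_rS hk D n
  have hL : 0 < (k - 1) * D + 1 := Nat.succ_pos _
  generalize (k - 1) * D + 1 = L at hL hR ⊢
  generalize R k D n = r, rS k L = c at hR ⊢
  rcases n.eq_zero_or_pos with rfl | hn
  · simp only [CharP.cast_eq_zero, div_zero, add_zero]
    positivity
  have hr : (r : ℝ) ≤ (n / L + 1) * c :=
    calc (r : ℝ) ≤ ((n / L : ℕ) + 1 : ℝ) * c := by exact_mod_cast hR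
      _ ≤ (n / L + 1) * c := by gcongr; exact Nat.cast_div_le
  calc (r : ℝ) / n ≤ (n / L + 1) * c / n := by gcongr
    _ = c / L + c / n := by field_simp

lemma le_rS_div_of_tendsto_R_div {k D : ℕ} (hk : 2 ≤ k) {a : ℝ}
    (ha : Tendsto (fun n : ℕ => (R k D n : ℝ) / n) atTop (𝓝 a)) :
    a ≤ rS k ((k - 1) * D + 1) / ((k - 1) * D + 1 : ℕ) := by
  have hbound := (tendsto_const_div_atTop_nhds_zero_nat (rS k ((k - 1) * D + 1) : ℝ)).const_add
    ((rS k ((k - 1) * D + 1) : ℝ) / ((k - 1) * D + 1 : ℕ))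
  rw [add_zero] at hbound
  exact le_of_tendsto_of_tendsto' ha hbound (R_div_le hk D)

lemma tendsto_zero_of_le_of_tendsto_of_tendsto {ι β : Type*} {l : Filter β} {l' : Filter ι}
    [l'.NeBot] {f : β → ℝ} {g : ι → β → ℝ} {α : ι → ℝ} (hf : ∀ n, 0 ≤ f n)
    (hfg : ∀ D n, f n ≤ g D n) (hg : ∀ᶠ D in l', Tendsto (g D) l (𝓝 (α D)))
    (hα : Tendsto α l' (𝓝 0)) : Tendsto f l (𝓝 0) := by
  refine tendsto_order.2 ⟨fun a ha => .of_forall fun n => ha.trans_le (hf n), fun ε hε => ?_⟩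
  obtain ⟨D, hDε, hD⟩ := ((hα.eventually (gt_mem_nhds hε)).and hg).exists
  filter_upwards [hD.eventually (gt_mem_nhds hDε)] with n hn using (hfg D n).trans_lt hn

theorem szemeredi_iff_alpha_to_zero (k : ℕ) (hk : 3 ≤ k) (α : ℕ → ℝ)
    (hα : ∀ D : ℕ, 1 ≤ D →
      Filter.Tendsto (fun n : ℕ => (R k D n : ℝ) / n) Filter.atTop (nhds (α D))) :
    Filter.Tendsto (fun n : ℕ => (rS k n : ℝ) / n) Filter.atTop (nhds 0) ↔
      Filter.Tendsto α Filter.atTop (nhds 0) := by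
  have hk2 : 2 ≤ k := by omega
  constructor
  · intro hr
    have hL : Tendsto (fun D => (k - 1) * D + 1) atTop atTop := tendsto_atTop_mono
      (fun D => Nat.le_succ_of_le (Nat.le_mul_of_pos_left D (by omega))) tendsto_id
    refine tendsto_of_tendsto_of_tendsto_of_le_of_le' tendsto_const_nhds (hr.comp hL) ?_ ?_
    · filter_upwards [eventually_ge_atTop 1] with D hD
      exact ge_of_tendsto' (hα D hD) fun n => by positivity
    · filter_upwards [eventually_ge_atTop 1] with D hD
      exact le_rS_div_of_tendsto_R_div hk2 (hα D hD)
  · exact tendsto_zero_of_le_of_tendsto_of_tendsto (fun n => by positivity)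
      (fun D n => by gcongr; exact_mod_cast rS_le_R k D n)
      ((eventually_ge_atTop 1).mono hα)
end

section
/- For even k ≥ 4 (more generally whenever the relevant periodic construction applies): α_{2m,2}= α_{2m-1,2} = (2m-2)/(2m-1) for m ≥ 2; equivalently, for every k ≥ 3, α_{k,2} = (2⌊(k-1)/2⌋)/(2⌊(k-1)/2⌋+1). -/
/-! Write `q = 2m + 1` with `m = ⌊(k - 1)/2⌋`, so `q ≤ k ≤ q + 1`.

The integers in `[1, n]` not divisible by `q` contain no `q`-term progression with difference
`1` or `2`, because such a progression meets every residue class mod `q`; this gives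
`R ≥ n - ⌊n/q⌋`.

Conversely a set avoiding `k`-term progressions avoids `(q + 1)`-term ones. Scan its
non-members from left to right: consecutive non-members are at most `q + 1` apart, two gaps of
length `q + 1` cannot follow each other, and a gap of length `q + 1` right after one of length
`q` forces a gap of length `1` next: otherwise a progression of difference `2` and length
`q + 1` fits in `S`, jumping over the two gap ends, which lie at odd distance from its terms. So the excess
`x - q · #(non-members ≤ x)` never exceeds `2`, and `q · R ≤ (q - 1) n + q + 1`. -/

open Finset Filter Topology

lemma HasAPd.of_le {S : Finset ℕ} {k l d : ℕ} (hkl : k ≤ l) (h : HasAPd S l d) : HasAPd S k d :=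
  let ⟨i, hi, hS⟩ := h
  ⟨i, hi, fun j hj => hS j (hj.trans_le hkl)⟩

lemma AvoidsAP.of_le {k l D n : ℕ} {S : Finset ℕ} (hkl : k ≤ l) (h : AvoidsAP k D n S) :
    AvoidsAP l D n S :=
  ⟨h.1, fun d hd hdD hS => h.2 d hd hdD (hS.of_le hkl)⟩

lemma AvoidsAP.card_le {k D n : ℕ} {S : Finset ℕ} (h : AvoidsAP k D n S) : #S ≤ n := by
  simpa using card_le_card h.1

lemma avoidsAP_empty {k : ℕ} (hk : 1 ≤ k) (D n : ℕ) : AvoidsAP k D n ∅ :=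
  ⟨empty_subset _, fun _ _ _ ⟨_, _, hS⟩ => notMem_empty _ (hS 0 hk)⟩

lemma bddAbove_card_avoidsAP (k D n : ℕ) :
    BddAbove {m : ℕ | ∃ S : Finset ℕ, AvoidsAP k D n S ∧ #S = m} :=
  ⟨n, by rintro _ ⟨S, hS, rfl⟩; exact hS.card_le⟩

lemma le_R {k D n : ℕ} {S : Finset ℕ} (h : AvoidsAP k D n S) : #S ≤ R k D n :=
  le_csSup (bddAbove_card_avoidsAP k D n) ⟨S, h, rfl⟩

lemma exists_avoidsAP_card_eq_R {k : ℕ} (hk : 1 ≤ k) (D n : ℕ) :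
    ∃ S, AvoidsAP k D n S ∧ #S = R k D n := by
  refine Nat.sSup_mem ?_ (bddAbove_card_avoidsAP k D n)
  exact ⟨0, ∅, avoidsAP_empty hk D n, card_empty⟩

lemma not_hasAPd_filter_not_dvd (s : Finset ℕ) {q k d : ℕ} (hq : 0 < q) (hqk : q ≤ k)
    (hd : d.Coprime q) : ¬ HasAPd {x ∈ s | ¬ q ∣ x} k d := by
  rintro ⟨i, -, hS⟩
  -- `(q - 1) * i ≡ -i`, so the `j`-th term `i + j * d` is divisible by `q`
  obtain ⟨j, hjq, hj⟩ := Nat.exists_mul_mod_eq_of_coprime ((q - 1) * i) hd hq.ne'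
  refine (mem_filter.1 (hS j (hjq.trans_le hqk))).2 ?_
  have hstep : i + j * d ≡ i + (q - 1) * i [MOD q] := Nat.ModEq.add_left i (by rwa [mul_comm])
  have hqi : i + (q - 1) * i = q * i := by
    have := Nat.le_mul_of_pos_left i hq
    rw [Nat.sub_one_mul]
    omega
  rw [hqi] at hstep
  exact Nat.modEq_zero_iff_dvd.1 (hstep.trans (Nat.modEq_zero_iff_dvd.2 (dvd_mul_right q i)))

lemma card_filter_not_dvd_Icc (n q : ℕ) : #{x ∈ Icc 1 n | ¬ q ∣ x} = n - n / q := by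
  rw [filter_not, card_sdiff_of_subset (filter_subset _ _), Nat.card_Icc,
    show Icc 1 n = Ioc 0 n from Icc_add_one_left_eq_Ioc 0 n, Nat.Ioc_filter_dvd_card_eq_div,
    Nat.add_sub_cancel]

lemma sub_one_mul_le_mul_sub_div (n q : ℕ) : (q - 1) * n ≤ q * (n - n / q) := by
  rw [Nat.sub_one_mul, Nat.mul_sub]
  have := Nat.mul_div_le n q
  omega

lemma avoidsAP_filter_not_dvd {k m : ℕ} (hmk : 2 * m + 1 ≤ k) (n : ℕ) :
    AvoidsAP k 2 n {x ∈ Icc 1 n | ¬ (2 * m + 1) ∣ x} := by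
  refine ⟨filter_subset _ _, fun d hd hd2 => not_hasAPd_filter_not_dvd _ (by omega) hmk ?_⟩
  interval_cases d
  · exact Nat.coprime_one_left _
  · exact Nat.coprime_two_left.2 (odd_two_mul_add_one m)

section Scan

variable {S : Finset ℕ}

def missingCount (S : Finset ℕ) (x : ℕ) : ℕ := #(Icc 1 x \ S)

lemma missingCount_eq (x : ℕ) (hS : S ⊆ Icc 1 x) : missingCount S x = x - #S := by
  rw [missingCount, card_sdiff_of_subset hS, Nat.card_Icc, Nat.add_sub_cancel]

def ConsecutiveNotMem (S : Finset ℕ) (a x : ℕ) : Prop :=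
  a < x ∧ a ∉ S ∧ x ∉ S ∧ ∀ y, a < y → y < x → y ∈ S

lemma exists_consecutiveNotMem (h0 : 0 ∉ S) {x : ℕ} (hx : x ∉ S) (hx0 : 0 < x) :
    ∃ a, ConsecutiveNotMem S a x := by
  classical
  have hlt : Nat.findGreatest (· ∉ S) (x - 1) < x := by
    have := Nat.findGreatest_le (P := (· ∉ S)) (x - 1)
    omega
  refine ⟨_, hlt, Nat.findGreatest_spec (P := (· ∉ S)) (Nat.zero_le _) h0, hx, fun y hay hyx => ?_⟩
  exact not_not.1 (Nat.findGreatest_is_greatest hay (by omega))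

namespace ConsecutiveNotMem

variable {a b x : ℕ}

lemma missingCount_lt (h : ConsecutiveNotMem S a x) : missingCount S a < missingCount S x := by
  refine card_lt_card ((ssubset_iff_of_subset
    (sdiff_subset_sdiff (Icc_subset_Icc_right h.1.le) le_rfl)).2 ⟨x, ?_, ?_⟩)
  · exact mem_sdiff.2 ⟨mem_Icc.2 ⟨Nat.one_le_of_lt h.1, le_rfl⟩, h.2.2.1⟩
  · intro hx
    exact (mem_Icc.1 (mem_sdiff.1 hx).1).2.not_gt h.1

lemma le_add {k : ℕ} (h1 : ¬ HasAPd S k 1) (h : ConsecutiveNotMem S a x) : x ≤ a + k := by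
  by_contra hx
  exact h1 ⟨a + 1, by omega, fun j hj => h.2.2.2 _ (by omega) (by omega)⟩

lemma succ_notMem_of_long_gaps {m : ℕ} (h2 : ¬ HasAPd S (2 * m + 2) 2)
    (hab : ConsecutiveNotMem S a b) (hbx : ConsecutiveNotMem S b x)
    (hgap : a + (2 * m + 1) ≤ b) (hx : x = b + (2 * m + 2)) : x + 1 ∉ S := by
  intro hx1
  -- the progression ends at `x + 1`, and `b`, `x` lie at odd distance from it
  refine h2 ⟨b + 1 - 2 * m, by omega, fun j hj => ?_⟩
  rcases lt_trichotomy (b + 1 - 2 * m + j * 2) b with hlt | heq | hgt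
  · exact hab.2.2.2 _ (by omega) hlt
  · omega
  · by_cases hend : b + 1 - 2 * m + j * 2 = x + 1
    · rwa [hend]
    · exact hbx.2.2.2 _ hgt (by omega)

end ConsecutiveNotMem

/-- With `q = 2m + 1`, the excess `x - q · missingCount S x` at a non-member `x` is at most `0`,
or at most `1` right after a gap of length at least `q`, or at most `2` right before a gap of
length `1`. -/
def ScanInvariant (m : ℕ) (S : Finset ℕ) (x : ℕ) : Prop :=
  x ≤ (2 * m + 1) * missingCount S x ∨
  (x ≤ (2 * m + 1) * missingCount S x + 1 ∧ ∃ a, ConsecutiveNotMem S a x ∧ a + (2 * m + 1) ≤ x) ∨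
  (x ≤ (2 * m + 1) * missingCount S x + 2 ∧ x + 1 ∉ S)

namespace ScanInvariant

variable {m b x : ℕ}

lemma le (h : ScanInvariant m S x) : x ≤ (2 * m + 1) * missingCount S x + 2 := by
  rcases h with h | ⟨h, -⟩ | ⟨h, -⟩ <;> omega

lemma step (hm : 1 ≤ m) (h1 : ¬ HasAPd S (2 * m + 2) 1) (h2 : ¬ HasAPd S (2 * m + 2) 2)
    (hbx : ConsecutiveNotMem S b x) (hb : ScanInvariant m S b) : ScanInvariant m S x := by
  have hx := hbx.le_add h1
  have hmul : (2 * m + 1) * missingCount S b + (2 * m + 1) ≤ (2 * m + 1) * missingCount S x := by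
    rw [← Nat.mul_succ]
    exact Nat.mul_le_mul_left _ hbx.missingCount_lt
  have hnext : b + 1 ∉ S → x = b + 1 := fun hb1 => by
    by_contra hne
    have := hbx.1
    exact hb1 (hbx.2.2.2 _ (by omega) (by omega))
  by_cases hshort : x < b + (2 * m + 1)
  · left
    rcases hb with hb | ⟨hb, -⟩ | ⟨hb, hb1⟩
    · omega
    · omega
    · have := hnext hb1
      omega
  · right
    rcases hb with hb | ⟨hb, a, hab, hgap⟩ | ⟨hb, hb1⟩
    · exact Or.inl ⟨by omega, b, hbx, by omega⟩
    · by_cases hlong : x = b + (2 * m + 2)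
      · exact Or.inr ⟨by omega, hab.succ_notMem_of_long_gaps h2 hbx hgap hlong⟩
      · exact Or.inl ⟨by omega, b, hbx, by omega⟩
    · have := hnext hb1
      omega

end ScanInvariant

lemma scanInvariant_of_notMem {m : ℕ} (hm : 1 ≤ m) (h0 : 0 ∉ S)
    (h1 : ¬ HasAPd S (2 * m + 2) 1) (h2 : ¬ HasAPd S (2 * m + 2) 2) (x : ℕ) (hx : x ∉ S) :
    ScanInvariant m S x := by
  induction x using Nat.strong_induction_on with
  | _ x ih =>
    rcases Nat.eq_zero_or_pos x with rfl | hx0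
    · exact Or.inl (Nat.zero_le _)
    obtain ⟨b, hbx⟩ := exists_consecutiveNotMem h0 hx hx0
    exact (ih b hbx.1 hbx.2.1).step hm h1 h2 hbx

lemma AvoidsAP.mul_card_le {m n : ℕ} (hm : 1 ≤ m) (h : AvoidsAP (2 * m + 2) 2 n S) :
    (2 * m + 1) * #S ≤ 2 * m * n + (2 * m + 2) := by
  have h0 : 0 ∉ S := fun h0 => by simpa using h.1 h0
  have hn : n + 1 ∉ S := fun hn => by simpa using h.1 hn
  have hscan := (scanInvariant_of_notMem hm h0 (h.2 1 le_rfl one_le_two)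
    (h.2 2 one_le_two le_rfl) (n + 1) hn).le
  rw [missingCount_eq _ (h.1.trans (Icc_subset_Icc_right n.le_succ))] at hscan
  obtain ⟨t, ht⟩ := Nat.exists_eq_add_of_le (h.card_le.trans n.le_succ)
  rw [ht, Nat.add_sub_cancel_left] at hscan
  nlinarith

end Scan

lemma tendsto_div_of_mul_le {f : ℕ → ℕ} {p q C : ℕ} (hq : 0 < q) (hlo : ∀ n, p * n ≤ q * f n)
    (hhi : ∀ n, q * f n ≤ p * n + C) :
    Tendsto (fun n => (f n : ℝ) / n) atTop (𝓝 ((p : ℝ) / q)) := by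
  have hq' : (0 : ℝ) < q := by exact_mod_cast hq
  have hup : Tendsto (fun n : ℕ => (p : ℝ) / q + (C / q) / n) atTop (𝓝 ((p : ℝ) / q)) := by
    simpa using tendsto_const_nhds.add (tendsto_const_div_atTop_nhds_zero_nat ((C : ℝ) / q))
  refine tendsto_of_tendsto_of_tendsto_of_le_of_le' tendsto_const_nhds hup ?_ ?_ <;>
    filter_upwards [eventually_gt_atTop 0] with n hn <;>
    have hn' : (0 : ℝ) < n := by exact_mod_cast hn
  · rw [div_le_div_iff₀ hq' hn']
    exact_mod_cast (hlo n).trans_eq (mul_comm _ _)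
  · rw [div_le_iff₀ hn', add_mul, div_mul_cancel₀ _ hn'.ne', div_mul_eq_mul_div, ← add_div,
      le_div_iff₀ hq', mul_comm]
    exact_mod_cast hhi n

theorem alpha_D_two (k : ℕ) (hk : 3 ≤ k) :
    Filter.Tendsto (fun n : ℕ => (R k 2 n : ℝ) / n) Filter.atTop
      (nhds ((2 * (((k - 1) / 2 : ℕ) : ℝ)) / (2 * (((k - 1) / 2 : ℕ) : ℝ) + 1))) := by
  set m := (k - 1) / 2
  have hm : 1 ≤ m := by omega
  have hlo (n : ℕ) : 2 * m * n ≤ (2 * m + 1) * R k 2 n := by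
    have hR := le_R (avoidsAP_filter_not_dvd (show 2 * m + 1 ≤ k by omega) n)
    rw [card_filter_not_dvd_Icc] at hR
    exact (sub_one_mul_le_mul_sub_div n (2 * m + 1)).trans (Nat.mul_le_mul_left _ hR)
  have hhi (n : ℕ) : (2 * m + 1) * R k 2 n ≤ 2 * m * n + (2 * m + 2) := by
    obtain ⟨S, hS, hcard⟩ := exists_avoidsAP_card_eq_R (by omega : 1 ≤ k) 2 n
    rw [← hcard]
    exact (hS.of_le (by omega)).mul_card_le hm
  simpa using tendsto_div_of_mul_le (f := (R k 2 ·)) (by omega) hlo hhi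
end
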